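/- The limiting kurtosis of the Gepner statistic on W(n,n,n) equals 21/5: with m_r(n) the r-th central moment of gep over W(n,n,n), the sequence m_4(n)/m_2(n)² tends to 21/5 as n → ∞. In particular the limit is not 3, so the Gepner statistic on W(n,n,n) is not asymptotically normal. -/

import Mathlib

/-- The Gepner statistic of a word `w` over a totally ordered alphabet:
the number of triples of positions `i < j < k` such that `w_i w_j w_k`
reduces to one of the odd permutations `132`, `213`, `321`. -/
def gep {α : Type*} [LinearOrder α] (w : List α) : ℕ :=
  (Finset.univ.filter (fun t : Fin w.length × Fin w.length × Fin w.length =>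
    t.1 < t.2.1 ∧ t.2.1 < t.2.2 ∧
      ((w.get t.1 < w.get t.2.2 ∧ w.get t.2.2 < w.get t.2.1) ∨
       (w.get t.2.1 < w.get t.1 ∧ w.get t.1 < w.get t.2.2) ∨
       (w.get t.2.2 < w.get t.2.1 ∧ w.get t.2.1 < w.get t.1)))).card

/-- `W a1 a2 a3` is the (finite) set of words over the alphabet `{1,2,3}`
with exactly `a1` occurrences of `1`, `a2` occurrences of `2` and
`a3` occurrences of `3`. -/
def W (a1 a2 a3 : ℕ) : Finset (List ℕ) :=
  ((List.replicate a1 1 ++ List.replicate a2 2 ++ List.replicate a3 3).permutations).toFinset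
/-- The `r`-th central moment of the Gepner statistic over `W(n,n,n)`,
i.e. `(1/|W(n,n,n)|) ∑_{w ∈ W(n,n,n)} (gep(w) − n³/2)^r`, viewed as a
real number. -/
noncomputable def m (r n : ℕ) : ℝ :=
  (∑ w ∈ W n n n, ((gep w : ℝ) - (n : ℝ) ^ 3 / 2) ^ r) / ((W n n n).card : ℝ)

/-!
Among the `n³` position triples of a word in `W(n,n,n)` that carry all three letters, the odd
ones are counted by `gep` and the even ones by `n³ - gep`. Peeling off the first letter shows
`2 gep w = n³ - n D w`, where `D = cyclicImbalance` counts the cyclically ascending pairs of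
letters (`12`, `23`, `31`) minus the cyclically descending ones. Deleting the first letter of a
word in `W(a,b,c)` shifts `D` by a difference of letter counts, which yields a recursion in
`(a,b,c)` for the moments of `D`. The recursion is solved by explicit polynomials; on `(n,n,n)`
they give `E[D²] = n²` and `E[D⁴] = (21 n⁴ - 16 n³) / 5`, so the kurtosis is `21/5 - 16/(5n)`.
-/

section PairCount

variable {α : Type*}

lemma List.countP_eq_sum_get (q : α → Bool) (w : List α) :
    w.countP q = ∑ k : Fin w.length, if q (w.get k) then 1 else 0 := by
  induction w with
  | nil => simp
  | cons y w ih =>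
    change _ = ∑ k : Fin (w.length + 1), _
    rw [Fin.sum_univ_succ, List.countP_cons, ih, add_comm]
    rfl

def pairCount (p : α → α → Prop) [DecidableRel p] (w : List α) : ℕ :=
  ∑ j : Fin w.length, ∑ k : Fin w.length, if j < k ∧ p (w.get j) (w.get k) then 1 else 0

variable (p : α → α → Prop) [DecidableRel p]

@[simp]
lemma pairCount_nil : pairCount p [] = 0 := by simp [pairCount]

@[simp]
lemma pairCount_cons (x : α) (w : List α) :
    pairCount p (x :: w) = w.countP (fun y => p x y) + pairCount p w := by
  change ∑ j : Fin (w.length + 1), ∑ k : Fin (w.length + 1), _ = _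
  simp only [Fin.sum_univ_succ, Fin.succ_lt_succ_iff, Fin.succ_pos, Fin.not_lt_zero,
    false_and, if_false, true_and, List.get_cons_zero, zero_add, List.countP_eq_sum_get,
    decide_eq_true_eq]
  rfl

lemma pairCount_congr {q : α → α → Prop} [DecidableRel q] {w : List α}
    (h : ∀ y ∈ w, ∀ z ∈ w, p y z ↔ q y z) : pairCount p w = pairCount q w :=
  Finset.sum_congr rfl fun j _ => Finset.sum_congr rfl fun k _ =>
    if_congr (and_congr_right' (h _ (List.get_mem w j) _ (List.get_mem w k))) rfl rfl

end PairCount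

section CountPairs

variable {α : Type*} [DecidableEq α]

def countPairs (u v : α) (w : List α) : ℕ :=
  pairCount (fun y z => y = u ∧ z = v) w

@[simp]
lemma countPairs_nil (u v : α) : countPairs u v [] = 0 := pairCount_nil _

@[simp]
lemma countPairs_cons (u v x : α) (w : List α) :
    countPairs u v (x :: w) = (if x = u then w.count v else 0) + countPairs u v w := by
  rw [countPairs, pairCount_cons]
  split_ifs with h
  · simp only [h, true_and, List.count_eq_countP, countPairs, Nat.add_right_cancel_iff]
    rfl
  · simp [h, countPairs]

lemma countPairs_add_countPairs {u v : α} (huv : u ≠ v) (w : List α) :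
    countPairs u v w + countPairs v u w = w.count u * w.count v := by
  induction w with
  | nil => simp
  | cons x w ih =>
    simp only [countPairs_cons, List.count_cons, beq_iff_eq]
    by_cases hu : x = u
    · subst hu
      simp only [if_neg huv, if_true]
      linear_combination ih
    by_cases hv : x = v
    · subst hv
      simp only [if_neg hu, if_true]
      linear_combination ih
    · simp only [if_neg hu, if_neg hv]
      linear_combination ih

end CountPairs

def IsOddTriple {α : Type*} [LinearOrder α] (x y z : α) : Prop :=
  (x < z ∧ z < y) ∨ (y < x ∧ x < z) ∨ (z < y ∧ y < x)

instance {α : Type*} [LinearOrder α] (x : α) : DecidableRel (IsOddTriple x) :=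
  fun _ _ => by unfold IsOddTriple; infer_instance

lemma gep_cons {α : Type*} [LinearOrder α] (x : α) (w : List α) :
    gep (x :: w) = pairCount (IsOddTriple x) w + gep w := by
  simp only [gep, Finset.card_filter, Fintype.sum_prod_type]
  change ∑ i : Fin (w.length + 1), ∑ j : Fin (w.length + 1), ∑ k : Fin (w.length + 1), _ = _
  simp only [Fin.sum_univ_succ, Fin.succ_lt_succ_iff, Fin.succ_pos, Fin.not_lt_zero,
    false_and, and_false, if_false, true_and, List.get_cons_zero, Finset.sum_const_zero, zero_add]
  rfl

def cyclicImbalance (w : List ℕ) : ℤ :=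
  (countPairs 1 2 w + countPairs 2 3 w + countPairs 3 1 w : ℤ)
    - (countPairs 2 1 w + countPairs 3 2 w + countPairs 1 3 w : ℤ)

lemma two_mul_gep (w : List ℕ) (hw : ∀ x ∈ w, x = 1 ∨ x = 2 ∨ x = 3) :
    2 * (gep w : ℤ) = w.count 1 * w.count 2 * w.count 3
      - (w.count 3 * ((countPairs 1 2 w : ℤ) - countPairs 2 1 w)
        + w.count 1 * ((countPairs 2 3 w : ℤ) - countPairs 3 2 w)
        + w.count 2 * ((countPairs 3 1 w : ℤ) - countPairs 1 3 w)) := by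
  induction w with
  | nil => simp [gep]
  | cons x w ih =>
    obtain ⟨hx, hw⟩ := List.forall_mem_cons.1 hw
    specialize ih hw
    have h12 : (countPairs 1 2 w + countPairs 2 1 w : ℤ) = w.count 1 * w.count 2 := by
      exact_mod_cast countPairs_add_countPairs (by decide) w
    have h23 : (countPairs 2 3 w + countPairs 3 2 w : ℤ) = w.count 2 * w.count 3 := by
      exact_mod_cast countPairs_add_countPairs (by decide) w
    have h31 : (countPairs 3 1 w + countPairs 1 3 w : ℤ) = w.count 3 * w.count 1 := by
      exact_mod_cast countPairs_add_countPairs (by decide) w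
    have hodd (u v : ℕ) (huv : ∀ y z, (y = 1 ∨ y = 2 ∨ y = 3) → (z = 1 ∨ z = 2 ∨ z = 3) →
        (IsOddTriple x y z ↔ y = u ∧ z = v)) : pairCount (IsOddTriple x) w = countPairs u v w :=
      pairCount_congr _ fun y hy z hz => huv y z (hw y hy) (hw z hz)
    rw [gep_cons]
    rcases hx with rfl | rfl | rfl <;>
      simp only [countPairs_cons, List.count_cons_self, List.count_cons_of_ne, ne_eq,
        OfNat.one_ne_ofNat, OfNat.ofNat_ne_one, Nat.reduceEqDiff, not_false_eq_true, ↓reduceIte,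
        Nat.cast_add, Nat.cast_one, zero_add]
    · rw [hodd 3 2 (by unfold IsOddTriple; omega)]
      linear_combination ih + h23
    · rw [hodd 1 3 (by unfold IsOddTriple; omega)]
      linear_combination ih + h31
    · rw [hodd 2 1 (by unfold IsOddTriple; omega)]
      linear_combination ih + h12

lemma cyclicImbalance_cons_one (w : List ℕ) :
    cyclicImbalance (1 :: w) = cyclicImbalance w + w.count 2 - w.count 3 := by
  simp only [cyclicImbalance, countPairs_cons, OfNat.one_ne_ofNat, ↓reduceIte, Nat.cast_add,
    zero_add]
  ring

lemma cyclicImbalance_cons_two (w : List ℕ) :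
    cyclicImbalance (2 :: w) = cyclicImbalance w + w.count 3 - w.count 1 := by
  simp only [cyclicImbalance, countPairs_cons, OfNat.ofNat_ne_one, Nat.reduceEqDiff, ↓reduceIte,
    Nat.cast_add, zero_add]
  ring

lemma cyclicImbalance_cons_three (w : List ℕ) :
    cyclicImbalance (3 :: w) = cyclicImbalance w + w.count 1 - w.count 2 := by
  simp only [cyclicImbalance, countPairs_cons, OfNat.ofNat_ne_one, Nat.reduceEqDiff, ↓reduceIte,
    Nat.cast_add, zero_add]
  ring

lemma sum_permutations_toFinset {α M : Type*} [DecidableEq α] [AddCommMonoid M] {L : List α}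
    (hL : L ≠ []) (f : List α → M) :
    ∑ w ∈ L.permutations.toFinset, f w
      = ∑ x ∈ L.toFinset, ∑ w ∈ (L.erase x).permutations.toFinset, f (x :: w) := by
  rw [Finset.sum_sigma']
  symm
  refine Finset.sum_bij (fun p _ => p.1 :: p.2) ?_ ?_ ?_ fun _ _ => rfl
  · rintro ⟨x, t⟩ hp
    simp only [Finset.mem_sigma, List.mem_toFinset, List.mem_permutations] at hp ⊢
    exact List.cons_perm_iff_perm_erase.2 hp
  · rintro ⟨x, t⟩ - ⟨y, u⟩ - h
    obtain ⟨rfl, rfl⟩ := List.cons_eq_cons.1 h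
    rfl
  · intro w hw
    simp only [List.mem_toFinset, List.mem_permutations] at hw
    obtain _ | ⟨x, t⟩ := w
    · exact absurd (List.nil_perm.1 hw) hL
    · have hx : x ∈ L := hw.subset List.mem_cons_self
      exact ⟨⟨x, t⟩, by simpa [hx] using (List.cons_perm_iff_perm_erase.1 hw).2, rfl⟩

lemma sum_W_by_first_letter {M : Type*} [AddCommMonoid M] {a b c : ℕ} (h : a + b + c ≠ 0)
    (f : List ℕ → M) :
    ∑ w ∈ W a b c, f w = (if a = 0 then 0 else ∑ w ∈ W (a - 1) b c, f (1 :: w))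
      + (if b = 0 then 0 else ∑ w ∈ W a (b - 1) c, f (2 :: w))
      + (if c = 0 then 0 else ∑ w ∈ W a b (c - 1), f (3 :: w)) := by
  set L := List.replicate a 1 ++ List.replicate b 2 ++ List.replicate c 3
  have hL : L ≠ [] := by simpa [L] using h
  have hsupp : L.toFinset = ({1, 2, 3} : Finset ℕ).filter (· ∈ L) := by
    ext x; simp [L]; omega
  rw [W, sum_permutations_toFinset hL, hsupp, Finset.sum_filter, Finset.sum_insert (by decide),
    Finset.sum_insert (by decide), Finset.sum_singleton, ← add_assoc]
  congr 1
  congr 1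
  · rcases a with _ | a <;> simp [L, W, List.replicate_succ]
  · rcases b with _ | b <;> simp [L, W, List.replicate_succ, List.erase_append_right]
  · rcases c with _ | c <;> simp [L, W, List.replicate_succ, List.erase_append_right]

lemma count_of_mem_W {a b c : ℕ} {w : List ℕ} (hw : w ∈ W a b c) :
    w.count 1 = a ∧ w.count 2 = b ∧ w.count 3 = c := by
  simp only [W, List.mem_toFinset, List.mem_permutations] at hw
  simp [hw.count_eq, List.count_replicate]

lemma letter_of_mem_W {a b c : ℕ} {w : List ℕ} (hw : w ∈ W a b c) :
    ∀ x ∈ w, x = 1 ∨ x = 2 ∨ x = 3 := by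
  simp only [W, List.mem_toFinset, List.mem_permutations] at hw
  intro x hx
  have := hw.subset hx
  simp only [List.mem_append, List.mem_replicate] at this
  tauto

lemma Finset.sum_add_const_pow {ι R : Type*} [CommSemiring R] (s : Finset ι) (g : ι → R) (δ : R)
    (k : ℕ) : ∑ i ∈ s, (g i + δ) ^ k
      = ∑ j ∈ Finset.range (k + 1), k.choose j * δ ^ (k - j) * ∑ i ∈ s, g i ^ j := by
  simp_rw [add_pow, Finset.sum_comm (s := s), Finset.mul_sum]
  exact Finset.sum_congr rfl fun j _ => Finset.sum_congr rfl fun i _ => by ring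

noncomputable def momentSum (k a b c : ℕ) : ℝ :=
  ∑ w ∈ W a b c, (cyclicImbalance w : ℝ) ^ k

lemma momentSum_rec {a b c : ℕ} (h : a + b + c ≠ 0) (k : ℕ) :
    momentSum k a b c
      = (if a = 0 then 0 else ∑ j ∈ Finset.range (k + 1),
          k.choose j * ((b : ℝ) - c) ^ (k - j) * momentSum j (a - 1) b c)
      + (if b = 0 then 0 else ∑ j ∈ Finset.range (k + 1),
          k.choose j * ((c : ℝ) - a) ^ (k - j) * momentSum j a (b - 1) c)
      + (if c = 0 then 0 else ∑ j ∈ Finset.range (k + 1),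
          k.choose j * ((a : ℝ) - b) ^ (k - j) * momentSum j a b (c - 1)) := by
  have shift (x : ℕ) (δ : ℝ) (a' b' c' : ℕ)
      (hδ : ∀ w ∈ W a' b' c', (cyclicImbalance (x :: w) : ℝ) = cyclicImbalance w + δ) :
      ∑ w ∈ W a' b' c', (cyclicImbalance (x :: w) : ℝ) ^ k
        = ∑ j ∈ Finset.range (k + 1), k.choose j * δ ^ (k - j) * momentSum j a' b' c' := by
    rw [Finset.sum_congr rfl fun w hw => by rw [hδ w hw], Finset.sum_add_const_pow]
    rfl
  rw [momentSum, sum_W_by_first_letter h]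
  congr 1
  congr 1
  · refine if_congr Iff.rfl rfl (shift 1 _ _ _ _ fun w hw => ?_)
    obtain ⟨-, h2, h3⟩ := count_of_mem_W hw
    rw [cyclicImbalance_cons_one, h2, h3]
    push_cast; ring
  · refine if_congr Iff.rfl rfl (shift 2 _ _ _ _ fun w hw => ?_)
    obtain ⟨h1, -, h3⟩ := count_of_mem_W hw
    rw [cyclicImbalance_cons_two, h1, h3]
    push_cast; ring
  · refine if_congr Iff.rfl rfl (shift 3 _ _ _ _ fun w hw => ?_)
    obtain ⟨h1, h2, -⟩ := count_of_mem_W hw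
    rw [cyclicImbalance_cons_three, h1, h2]
    push_cast; ring

noncomputable def multinomial3 (a b c : ℕ) : ℝ :=
  (a + b + c).factorial / (a.factorial * b.factorial * c.factorial)

lemma multinomial3_pos (a b c : ℕ) : 0 < multinomial3 a b c := by
  unfold multinomial3; positivity

lemma multinomial3_zero : multinomial3 0 0 0 = 1 := by simp [multinomial3]

lemma succ_mul_multinomial3_succ_left (a b c : ℕ) :
    (a + 1 : ℝ) * multinomial3 (a + 1) b c = (a + b + c + 1) * multinomial3 a b c := by
  simp only [multinomial3, show a + 1 + b + c = a + b + c + 1 by omega, Nat.factorial_succ]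
  push_cast
  field_simp

lemma succ_mul_multinomial3_succ_mid (a b c : ℕ) :
    (b + 1 : ℝ) * multinomial3 a (b + 1) c = (a + b + c + 1) * multinomial3 a b c := by
  simp only [multinomial3, show a + (b + 1) + c = a + b + c + 1 by omega, Nat.factorial_succ]
  push_cast
  field_simp

lemma succ_mul_multinomial3_succ_right (a b c : ℕ) :
    (c + 1 : ℝ) * multinomial3 a b (c + 1) = (a + b + c + 1) * multinomial3 a b c := by
  simp only [multinomial3, show a + b + (c + 1) = a + b + c + 1 by omega, Nat.factorial_succ]
  push_cast
  field_simp

lemma Finset.sum_mul_eq_of_rescale {ι : Type*} {s : Finset ι} {f S Q : ι → ℝ} {μ μ' N t : ℝ}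
    (hS : ∀ j ∈ s, S j = Q j * μ') (hμ : N * μ' = t * μ) :
    (∑ j ∈ s, f j * S j) * N = t * μ * ∑ j ∈ s, f j * Q j := by
  rw [Finset.sum_mul, Finset.mul_sum]
  refine Finset.sum_congr rfl fun j hj => ?_
  rw [hS j hj]
  linear_combination (f j * Q j) * hμ

/-- The recursion is an identity of real polynomials: at `a = 0` the factor `a` discards the
value of `P` at `a - 1 = -1`, which does not correspond to any set of words. -/
theorem momentSum_eq_of_recursion {K : ℕ} {P : ℕ → ℝ → ℝ → ℝ → ℝ}
    (hbase : ∀ k ≤ K, P k 0 0 0 = 0 ^ k)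
    (hrec : ∀ k ≤ K, ∀ a b c : ℝ, (a + b + c) * P k a b c
      = a * ∑ j ∈ Finset.range (k + 1), k.choose j * (b - c) ^ (k - j) * P j (a - 1) b c
      + b * ∑ j ∈ Finset.range (k + 1), k.choose j * (c - a) ^ (k - j) * P j a (b - 1) c
      + c * ∑ j ∈ Finset.range (k + 1), k.choose j * (a - b) ^ (k - j) * P j a b (c - 1))
    {k : ℕ} (hk : k ≤ K) (a b c : ℕ) :
    momentSum k a b c = P k a b c * multinomial3 a b c := by
  induction hN : a + b + c using Nat.strong_induction_on generalizing k a b c with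
  | _ N ih =>
  rcases N.eq_zero_or_pos with rfl | hpos
  · obtain ⟨rfl, rfl, rfl⟩ : a = 0 ∧ b = 0 ∧ c = 0 := by omega
    simp [momentSum, W, cyclicImbalance, hbase k hk, multinomial3_zero]
  have IH (a' b' c' : ℕ) (hlt : a' + b' + c' < N) :
      ∀ j ∈ Finset.range (k + 1), momentSum j a' b' c' = P j a' b' c' * multinomial3 a' b' c' :=
    fun j hj => ih _ hlt ((Finset.mem_range_succ_iff.1 hj).trans hk) a' b' c' rfl
  have t1 : (if a = 0 then 0 else ∑ j ∈ Finset.range (k + 1),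
        k.choose j * ((b : ℝ) - c) ^ (k - j) * momentSum j (a - 1) b c) * N
      = a * multinomial3 a b c * ∑ j ∈ Finset.range (k + 1),
        k.choose j * ((b : ℝ) - c) ^ (k - j) * P j (a - 1) b c := by
    rcases a with _ | a
    · simp
    simp only [Nat.succ_ne_zero, if_false, Nat.add_sub_cancel, Nat.cast_succ, add_sub_cancel_right]
    exact Finset.sum_mul_eq_of_rescale (IH a b c (by omega)) (by
      rw [succ_mul_multinomial3_succ_left, ← hN]; push_cast; ring)
  have t2 : (if b = 0 then 0 else ∑ j ∈ Finset.range (k + 1),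
        k.choose j * ((c : ℝ) - a) ^ (k - j) * momentSum j a (b - 1) c) * N
      = b * multinomial3 a b c * ∑ j ∈ Finset.range (k + 1),
        k.choose j * ((c : ℝ) - a) ^ (k - j) * P j a (b - 1) c := by
    rcases b with _ | b
    · simp
    simp only [Nat.succ_ne_zero, if_false, Nat.add_sub_cancel, Nat.cast_succ, add_sub_cancel_right]
    exact Finset.sum_mul_eq_of_rescale (IH a b c (by omega)) (by
      rw [succ_mul_multinomial3_succ_mid, ← hN]; push_cast; ring)
  have t3 : (if c = 0 then 0 else ∑ j ∈ Finset.range (k + 1),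
        k.choose j * ((a : ℝ) - b) ^ (k - j) * momentSum j a b (c - 1)) * N
      = c * multinomial3 a b c * ∑ j ∈ Finset.range (k + 1),
        k.choose j * ((a : ℝ) - b) ^ (k - j) * P j a b (c - 1) := by
    rcases c with _ | c
    · simp
    simp only [Nat.succ_ne_zero, if_false, Nat.add_sub_cancel, Nat.cast_succ, add_sub_cancel_right]
    exact Finset.sum_mul_eq_of_rescale (IH a b c (by omega)) (by
      rw [succ_mul_multinomial3_succ_right, ← hN]; push_cast; ring)
  refine mul_right_cancel₀ (Nat.cast_ne_zero.2 hpos.ne' : (N : ℝ) ≠ 0) ?_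
  rw [momentSum_rec (by omega), add_mul, add_mul, t1, t2, t3, ← hN]
  push_cast
  linear_combination -(multinomial3 a b c) * hrec k hk a b c

/-- The mean of `cyclicImbalance ^ k` over `W a b c` for `k ≤ 4`, as a polynomial in
`a, b, c`; the odd moments vanish because reversing a word negates `cyclicImbalance`. -/
noncomputable def cyclicImbalanceMoment : ℕ → ℝ → ℝ → ℝ → ℝ
  | 0, _, _, _ => 1
  | 2, a, b, c => (a * b + b * c + c * a) * (1 + (a + b + c)) / 3 - 3 * (a * b * c)
  | 4, a, b, c =>
    -2 * (a * b * c) + 27 * (a * b * c) ^ 2 - 84 / 5 * ((a * b + b * c + c * a) * (a * b * c))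
      + 7 / 15 * (a * b + b * c + c * a) ^ 2 + 12 / 5 * ((a + b + c) * (a * b * c))
      - 2 / 15 * ((a + b + c) * (a * b + b * c + c * a))
      - 6 * ((a + b + c) * (a * b + b * c + c * a) * (a * b * c))
      + 4 / 5 * ((a + b + c) * (a * b + b * c + c * a) ^ 2)
      + 22 / 5 * ((a + b + c) ^ 2 * (a * b * c))
      - 4 / 15 * ((a + b + c) ^ 2 * (a * b + b * c + c * a))
      + 1 / 3 * ((a + b + c) ^ 2 * (a * b + b * c + c * a) ^ 2)
      - 2 / 15 * ((a + b + c) ^ 3 * (a * b + b * c + c * a))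
  | _, _, _, _ => 0

lemma momentSum_eq_cyclicImbalanceMoment {k : ℕ} (hk : k ≤ 4) (a b c : ℕ) :
    momentSum k a b c = cyclicImbalanceMoment k a b c * multinomial3 a b c := by
  refine momentSum_eq_of_recursion (K := 4) ?_ ?_ hk a b c
  · intro k hk
    interval_cases k <;> simp [cyclicImbalanceMoment]
  · intro k hk a b c
    interval_cases k <;>
      simp only [cyclicImbalanceMoment, Finset.sum_range_succ, Finset.sum_range_zero, Nat.choose,
        Nat.reduceSub, Nat.reduceAdd] <;>
      push_cast <;> ring

lemma gep_sub_eq_cyclicImbalance {n : ℕ} {w : List ℕ} (hw : w ∈ W n n n) :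
    (gep w : ℝ) - (n : ℝ) ^ 3 / 2 = -((n : ℝ) / 2) * cyclicImbalance w := by
  have key := two_mul_gep w (letter_of_mem_W hw)
  obtain ⟨h1, h2, h3⟩ := count_of_mem_W hw
  rw [h1, h2, h3] at key
  have hz : 2 * (gep w : ℤ) = (n : ℤ) ^ 3 - n * cyclicImbalance w := by
    rw [key, cyclicImbalance]; ring
  have hr : 2 * (gep w : ℝ) = (n : ℝ) ^ 3 - n * cyclicImbalance w := by exact_mod_cast hz
  linarith

lemma m_eq_cyclicImbalanceMoment {r : ℕ} (hr : r ≤ 4) (n : ℕ) :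
    m r n = (-((n : ℝ) / 2)) ^ r * cyclicImbalanceMoment r n n n := by
  have hcard : ((W n n n).card : ℝ) = multinomial3 n n n := by
    simpa [momentSum, cyclicImbalanceMoment] using
      momentSum_eq_cyclicImbalanceMoment (Nat.zero_le 4) n n n
  have hsum : ∑ w ∈ W n n n, ((gep w : ℝ) - (n : ℝ) ^ 3 / 2) ^ r
      = (-((n : ℝ) / 2)) ^ r * momentSum r n n n := by
    rw [momentSum, Finset.mul_sum]
    exact Finset.sum_congr rfl fun w hw => by rw [gep_sub_eq_cyclicImbalance hw, mul_pow]
  rw [m, hsum, hcard, momentSum_eq_cyclicImbalanceMoment hr]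
  field_simp [(multinomial3_pos n n n).ne']

lemma m_four_div_m_two_sq {n : ℕ} (hn : n ≠ 0) :
    m 4 n / m 2 n ^ 2 = 21 / 5 - 16 / 5 * (n : ℝ)⁻¹ := by
  rw [m_eq_cyclicImbalanceMoment (by norm_num), m_eq_cyclicImbalanceMoment (by norm_num)]
  simp only [cyclicImbalanceMoment]
  field_simp
  ring

theorem gep_words_limiting_kurtosis :
    Filter.Tendsto (fun n => m 4 n / (m 2 n) ^ 2) Filter.atTop (nhds (21 / 5 : ℝ))
      ∧ (21 / 5 : ℝ) ≠ 3 := by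
  refine ⟨?_, by norm_num⟩
  have hlim : Filter.Tendsto (fun n : ℕ => 21 / 5 - 16 / 5 * (n : ℝ)⁻¹) Filter.atTop
      (nhds (21 / 5)) := by
    simpa using tendsto_const_nhds.sub (tendsto_inv_atTop_nhds_zero_nat.const_mul (16 / 5 : ℝ))
  exact hlim.congr' (Filter.eventually_atTop.2
    ⟨1, fun n hn => (m_four_div_m_two_sq (by omega)).symm⟩)
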